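/- arXiv:2202.08747 — 4 statements merged into one kernel-verified Lean document; each statement's English description precedes it below -/
import Mathlib

section
/- Let a, b be coprime positive odd integers and F = {{0, a}, {0, b}}. Then π(F) = 1/2, witnessed by the pattern X = 2ℤ of even integers, which hits both ships. -/
/-!
A pattern hitting a two-point ship `{0, c}` (`c ≠ 0`) meets every pair `{n, n + |c|}`. A window of
`2|c|` consecutive integers splits into `|c|` such pairs, so it holds at least `|c|` points of the
pattern, and hence the pattern has lower density at least `1/2`. Conversely, for `c` odd one of
`n`, `n + c` is even, so the even integers, of density `1/2`, hit `{0, c}`.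
-/

open Filter Topology

/-- A shooting pattern `X` hits a ship `S` if every translate of `S` intersects `X`. -/
def Hits (X S : Set ℤ) : Prop := ∀ n : ℤ, ∃ s ∈ S, n + s ∈ X

/-- Lower asymptotic density of a set of integers. -/
noncomputable def lowerDensity (X : Set ℤ) : ℝ :=
  Filter.liminf (fun N : ℕ =>
    ((X ∩ Set.Icc (-(N:ℤ)) (N:ℤ)).ncard : ℝ) / (2 * N + 1)) Filter.atTop

/-- Optimal piercing density of a family of ships. -/
noncomputable def piercing (F : Set (Set ℤ)) : ℝ :=
  sInf (lowerDensity '' {X | ∀ S ∈ F, Hits X S})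

lemma piercing_eq_of_forall_le {F : Set (Set ℤ)} {δ : ℝ} {X₀ : Set ℤ}
    (hX₀ : ∀ S ∈ F, Hits X₀ S) (hδ : lowerDensity X₀ = δ)
    (hle : ∀ X : Set ℤ, (∀ S ∈ F, Hits X S) → δ ≤ lowerDensity X) :
    piercing F = δ := by
  have hmem : δ ∈ lowerDensity '' {X | ∀ S ∈ F, Hits X S} := ⟨X₀, hX₀, hδ⟩
  have hlb : δ ∈ lowerBounds (lowerDensity '' {X | ∀ S ∈ F, Hits X S}) := by
    rintro _ ⟨X, hX, rfl⟩
    exact hle X hX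
  exact le_antisymm (csInf_le ⟨δ, hlb⟩ hmem) (le_csInf ⟨δ, hmem⟩ hlb)

noncomputable def densityRatio (X : Set ℤ) (N : ℕ) : ℝ :=
  ((X ∩ Set.Icc (-(N:ℤ)) (N:ℤ)).ncard : ℝ) / (2 * N + 1)

lemma lowerDensity_eq_liminf (X : Set ℤ) : lowerDensity X = liminf (densityRatio X) atTop := rfl

lemma ncard_Icc_neg_self (N : ℕ) : (Set.Icc (-(N:ℤ)) N).ncard = 2 * N + 1 := by
  rw [← Finset.coe_Icc, Set.ncard_coe_finset, Int.card_Icc]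
  omega

lemma densityRatio_le_one (X : Set ℤ) (N : ℕ) : densityRatio X N ≤ 1 := by
  have hcard : (X ∩ Set.Icc (-(N:ℤ)) N).ncard ≤ 2 * N + 1 :=
    ncard_Icc_neg_self N ▸ Set.ncard_le_ncard Set.inter_subset_right (Set.finite_Icc _ _)
  refine div_le_one_of_le₀ ?_ (by positivity)
  exact_mod_cast hcard

lemma tendsto_const_div_two_mul_add_one (C : ℝ) :
    Tendsto (fun N : ℕ => C / (2 * N + 1)) atTop (𝓝 0) := by
  have h : Tendsto (fun N : ℕ => 2 * (N : ℝ) + 1) atTop atTop :=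
    tendsto_atTop_add_const_right _ _
      (tendsto_natCast_atTop_atTop.const_mul_atTop two_pos)
  exact h.const_div_atTop C

lemma tendsto_sub_const_div (δ C : ℝ) :
    Tendsto (fun N : ℕ => δ - C / (2 * N + 1)) atTop (𝓝 δ) := by
  simpa using (tendsto_const_div_two_mul_add_one C).const_sub δ

lemma sub_div_le_densityRatio {X : Set ℤ} {δ C : ℝ} {N : ℕ}
    (h : δ * (2 * N + 1) - C ≤ (X ∩ Set.Icc (-(N:ℤ)) N).ncard) :
    δ - C / (2 * N + 1) ≤ densityRatio X N := by
  rw [densityRatio, sub_div' (by positivity)]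
  exact div_le_div_of_nonneg_right h (by positivity)

lemma le_lowerDensity_of_ncard_ge {X : Set ℤ} (δ C : ℝ)
    (h : ∀ N : ℕ, δ * (2 * N + 1) - C ≤ (X ∩ Set.Icc (-(N:ℤ)) N).ncard) :
    δ ≤ lowerDensity X := by
  have hlim := tendsto_sub_const_div δ C
  rw [lowerDensity_eq_liminf, ← hlim.liminf_eq]
  exact liminf_le_liminf (Eventually.of_forall fun N => sub_div_le_densityRatio (h N))
    hlim.isBoundedUnder_ge
    (isBoundedUnder_of_eventually_le (Eventually.of_forall (densityRatio_le_one X))).isCoboundedUnder_ge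

lemma lowerDensity_eq_of_abs_ncard_sub_le {X : Set ℤ} (δ C : ℝ)
    (h : ∀ N : ℕ, |(X ∩ Set.Icc (-(N:ℤ)) N).ncard - δ * (2 * N + 1)| ≤ C) :
    lowerDensity X = δ := by
  have hup : Tendsto (fun N : ℕ => δ + C / (2 * N + 1)) atTop (𝓝 δ) := by
    simpa using (tendsto_const_div_two_mul_add_one C).const_add δ
  have hN (N : ℕ) := abs_le.mp (h N)
  refine (tendsto_of_tendsto_of_tendsto_of_le_of_le (tendsto_sub_const_div δ C) hup
    (fun N => sub_div_le_densityRatio (by linarith [hN N])) fun N => ?_).liminf_eq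
  rw [densityRatio, add_div' _ _ _ (by positivity)]
  exact div_le_div_of_nonneg_right (by linarith [hN N]) (by positivity)

lemma ncard_even_inter_Icc (N : ℕ) :
    ({n : ℤ | Even n} ∩ Set.Icc (-(N:ℤ)) N).ncard = 2 * (N / 2) + 1 := by
  have himg : {n : ℤ | Even n} ∩ Set.Icc (-(N:ℤ)) N
      = (2 * ·) '' Set.Icc (-((N / 2 : ℕ) : ℤ)) (N / 2 : ℕ) := by
    ext n
    simp only [Set.mem_inter_iff, Set.mem_ofPred_eq, Set.mem_Icc, Set.mem_image]
    constructor
    · rintro ⟨⟨k, rfl⟩, h₁, h₂⟩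
      exact ⟨k, by omega, by ring⟩
    · rintro ⟨k, hk, rfl⟩
      exact ⟨⟨k, by ring⟩, by omega, by omega⟩
  rw [himg, Set.ncard_image_of_injective _ (mul_right_injective₀ two_ne_zero),
    ← Finset.coe_Icc, Set.ncard_coe_finset, Int.card_Icc]
  omega

lemma lowerDensity_even : lowerDensity {n : ℤ | Even n} = 1 / 2 := by
  refine lowerDensity_eq_of_abs_ncard_sub_le (1 / 2) (1 / 2) fun N => ?_
  have h₁ : (N : ℝ) ≤ (2 * (N / 2) + 1 : ℕ) := by exact_mod_cast (by omega : N ≤ 2 * (N / 2) + 1)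
  have h₂ : ((2 * (N / 2) + 1 : ℕ) : ℝ) ≤ N + 1 := by
    exact_mod_cast (by omega : 2 * (N / 2) + 1 ≤ N + 1)
  rw [ncard_even_inter_Icc, abs_le]
  constructor <;> linarith

lemma hits_even_of_odd {c : ℤ} (hc : Odd c) : Hits {n : ℤ | Even n} {0, c} := by
  intro n
  rcases Int.even_or_odd n with h | h
  · exact ⟨0, by simp, by simpa using h⟩
  · exact ⟨c, by simp, h.add_odd hc⟩

section TwoPointShip

variable {X : Set ℤ}

lemma hits_pair_neg {c : ℤ} (h : Hits X {0, c}) : Hits X {0, -c} := by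
  intro n
  obtain ⟨s, hs, hX⟩ := h (n - c)
  rcases hs with rfl | rfl
  · exact ⟨-c, by simp, by simpa [sub_eq_add_neg] using hX⟩
  · exact ⟨0, by simp, by simpa using hX⟩

lemma hits_pair_natAbs {c : ℤ} (h : Hits X {0, c}) : Hits X {0, (c.natAbs : ℤ)} := by
  rcases Int.natAbs_eq c with hc | hc
  · rwa [← hc]
  · have h' := hits_pair_neg h
    rwa [hc, neg_neg] at h'

/-- The pairs `{n, n + c}` with `t ≤ n < t + c` partition `[t, t + 2c)`, and each meets `X`. -/
lemma le_ncard_inter_Ico_of_hits {c : ℕ} (h : Hits X {0, (c : ℤ)}) (t : ℤ) :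
    c ≤ (X ∩ Set.Ico t (t + 2 * c)).ncard := by
  choose f hf using h
  have hpt : ∀ n, f n = 0 ∨ f n = c := fun n => (hf n).1
  calc c = (Set.Ico t (t + c)).ncard := by
        rw [← Finset.coe_Ico, Set.ncard_coe_finset, Int.card_Ico]; omega
    _ ≤ (X ∩ Set.Ico t (t + 2 * c)).ncard := by
        refine Set.ncard_le_ncard_of_injOn (fun n => n + f n) (fun n hn => ⟨(hf n).2, ?_⟩)
          (fun m hm n hn hmn => ?_) ((Set.finite_Ico _ _).inter_of_right X)
        · simp only [Set.mem_Ico] at hn ⊢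
          rcases hpt n with h | h <;> omega
        · simp only [Set.mem_Ico] at hm hn hmn
          rcases hpt m with h | h <;> rcases hpt n with h' | h' <;> omega

lemma mul_le_ncard_inter_Ico_of_hits {c : ℕ} (h : Hits X {0, (c : ℤ)}) (k : ℕ) (t : ℤ) :
    k * c ≤ (X ∩ Set.Ico t (t + k * (2 * c))).ncard := by
  induction k generalizing t with
  | zero => simp
  | succ k ih =>
    have hsplit : X ∩ Set.Ico t (t + (k + 1 : ℕ) * (2 * c))
        = X ∩ Set.Ico t (t + k * (2 * c)) ∪
          X ∩ Set.Ico (t + k * (2 * c)) (t + k * (2 * c) + 2 * c) := by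
      rw [← Set.inter_union_distrib_left, Set.Ico_union_Ico_eq_Ico (le_add_of_nonneg_right (by positivity))
        (by omega)]
      push_cast
      ring_nf
    rw [hsplit, Set.ncard_union_eq (Set.Ico_disjoint_Ico_same.mono Set.inter_subset_right
      Set.inter_subset_right) ((Set.finite_Ico _ _).inter_of_right X)
      ((Set.finite_Ico _ _).inter_of_right X), add_mul, one_mul]
    exact add_le_add (ih t) (le_ncard_inter_Ico_of_hits h _)

lemma half_le_lowerDensity_of_hits_natCast {c : ℕ} (hc : 0 < c) (h : Hits X {0, (c : ℤ)}) :
    1 / 2 ≤ lowerDensity X := by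
  refine le_lowerDensity_of_ncard_ge (1 / 2) c fun N => ?_
  set k := (2 * N + 1) / (2 * c)
  have hk : k * (2 * c) ≤ 2 * N + 1 := Nat.div_mul_le_self _ _
  have hk' : 2 * N + 1 < 2 * c * (k + 1) := Nat.lt_mul_div_succ _ (by omega)
  have hsub : Set.Ico (-(N:ℤ)) (-N + k * (2 * c)) ⊆ Set.Icc (-(N:ℤ)) N := by
    have : ((k * (2 * c) : ℕ) : ℤ) ≤ 2 * N + 1 := by exact_mod_cast hk
    push_cast at this
    intro n hn
    simp only [Set.mem_Ico, Set.mem_Icc] at hn ⊢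
    omega
  have hwindow : k * c ≤ (X ∩ Set.Icc (-(N:ℤ)) N).ncard :=
    (mul_le_ncard_inter_Ico_of_hits h k _).trans <|
      Set.ncard_le_ncard (Set.inter_subset_inter_right X hsub)
        ((Set.finite_Icc _ _).inter_of_right X)
  have hreal : (2 * N + 1 : ℝ) < 2 * (k * c) + 2 * c := by
    exact_mod_cast (by nlinarith : 2 * N + 1 < 2 * (k * c) + 2 * c)
  have hwindow' : (k * c : ℝ) ≤ (X ∩ Set.Icc (-(N:ℤ)) N).ncard := by exact_mod_cast hwindow
  linarith

lemma Hits.half_le_lowerDensity {c : ℤ} (hc : c ≠ 0) (h : Hits X {0, c}) :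
    1 / 2 ≤ lowerDensity X :=
  half_le_lowerDensity_of_hits_natCast (Int.natAbs_pos.mpr hc) (hits_pair_natAbs h)

end TwoPointShip

theorem stmt1_general (a b : ℤ) (hoa : Odd a) (hob : Odd b) :
    piercing {{0, a}, {0, b}} = 1 / 2 ∧
    (∀ S ∈ ({{0, a}, {0, b}} : Set (Set ℤ)), Hits {n : ℤ | Even n} S) ∧
    lowerDensity {n : ℤ | Even n} = 1 / 2 := by
  have hhit : ∀ S ∈ ({{0, a}, {0, b}} : Set (Set ℤ)), Hits {n : ℤ | Even n} S := by
    rintro S (rfl | rfl)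
    exacts [hits_even_of_odd hoa, hits_even_of_odd hob]
  refine ⟨piercing_eq_of_forall_le hhit lowerDensity_even fun X hX => ?_, hhit, lowerDensity_even⟩
  exact Hits.half_le_lowerDensity (by rintro rfl; simp at hoa) (hX _ (Set.mem_insert _ _))

theorem stmt1 (a b : ℤ) (ha : 0 < a) (hb : 0 < b) (hoa : Odd a) (hob : Odd b)
    (hcop : IsCoprime a b) :
    piercing {{0, a}, {0, b}} = 1 / 2 ∧
    (∀ S ∈ ({{0, a}, {0, b}} : Set (Set ℤ)), Hits {n : ℤ | Even n} S) ∧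
    lowerDensity {n : ℤ | Even n} = 1 / 2 :=
  stmt1_general a b hoa hob
end

section
/- Let a, b be coprime positive integers with a + b odd, and let F = {{0, a}, {0, b}}. Then π(F) = (a + b + 1) / (2(a + b)). -/
open Set Filter Topology

lemma hits_pair_zero_iff {X : Set ℤ} {c : ℤ} :
    Hits X {0, c} ↔ ∀ n, n ∈ X ∨ n + c ∈ X := by
  simp [Hits]

namespace ZMod

lemma add_one_le_two_mul_ncard_of_forall_or_add_one {M : ℕ} (hM : Odd M) {P : Set (ZMod M)}
    (hP : ∀ k, k ∈ P ∨ k + 1 ∈ P) : M + 1 ≤ 2 * P.ncard := by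
  have : NeZero M := ⟨hM.pos.ne'⟩
  have hcompl : Pᶜ.ncard ≤ P.ncard :=
    ncard_le_ncard_of_injOn (· + 1) (fun k hk => (hP k).resolve_left hk)
      (fun _ _ _ _ h => add_right_cancel h)
  have hsum := ncard_add_ncard_compl P
  rw [Nat.card_zmod] at hsum
  obtain ⟨m, rfl⟩ := hM
  omega

lemma even_val_or_even_val_add_one {M : ℕ} (hM : Odd M) (s : ZMod M) :
    Even s.val ∨ Even (s + 1).val := by
  have : NeZero M := ⟨hM.pos.ne'⟩
  refine or_iff_not_imp_left.mpr fun hs => ?_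
  rw [Nat.not_even_iff_odd] at hs
  have hlt : s.val + 1 < M := by
    obtain ⟨m, rfl⟩ := hM
    obtain ⟨j, hj⟩ := hs
    have := s.val_lt
    omega
  have hcast : s + 1 = ((s.val + 1 : ℕ) : ZMod M) := by push_cast [natCast_zmod_val]; rfl
  rw [hcast, val_cast_of_lt hlt]
  exact hs.add_one

lemma two_mul_ncard_setOf_even_val {M : ℕ} (hM : Odd M) :
    2 * {s : ZMod M | Even s.val}.ncard = M + 1 := by
  have : NeZero M := ⟨hM.pos.ne'⟩
  obtain ⟨m, rfl⟩ := hM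
  have himage : val '' {s : ZMod (2 * m + 1) | Even s.val} = (2 * ·) '' Iio (m + 1) := by
    ext j
    constructor
    · rintro ⟨s, ⟨i, hi⟩, rfl⟩
      have := s.val_lt
      exact ⟨i, by simp only [mem_Iio]; omega, by dsimp only; omega⟩
    · rintro ⟨i, hi, rfl⟩
      have hlt : 2 * i < 2 * m + 1 := by simp only [mem_Iio] at hi; omega
      exact ⟨(2 * i : ℕ), show Even (val _) by rw [val_cast_of_lt hlt]; exact even_two_mul i,
        val_cast_of_lt hlt⟩
  rw [← ncard_image_of_injective _ (val_injective _), himage,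
    ncard_image_of_injective _ (mul_right_injective₀ two_ne_zero), ncard_Iio_nat]
  ring

end ZMod

def windowWalk (a b : ℕ) (t : ℤ) (k : ZMod (a + b)) : ℤ := t + (k * a).val

section Pattern

variable {a b : ℕ}

lemma windowWalk_mem_Ico (hb : 0 < b) (t : ℤ) (k : ZMod (a + b)) :
    windowWalk a b t k ∈ Ico t (t + (a + b : ℕ)) := by
  have : NeZero (a + b) := ⟨by omega⟩
  have := (k * a).val_lt
  constructor <;> simp only [windowWalk] <;> omega

lemma windowWalk_injective (hb : 0 < b) (hab : a.Coprime b) (t : ℤ) :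
    Function.Injective (windowWalk a b t) := by
  have : NeZero (a + b) := ⟨by omega⟩
  intro k l hkl
  have hval : (k * a).val = (l * a).val := by
    simpa only [windowWalk, add_right_inj, Nat.cast_inj] using hkl
  exact (ZMod.unitOfCoprime a (Nat.coprime_self_add_right.mpr hab)).isUnit.mul_right_cancel
    (ZMod.val_injective _ hval)

lemma windowWalk_add_one (hb : 0 < b) (t : ℤ) (k : ZMod (a + b)) :
    windowWalk a b t (k + 1) = windowWalk a b t k + a ∨
      windowWalk a b t (k + 1) + b = windowWalk a b t k := by
  have : NeZero (a + b) := ⟨by omega⟩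
  have hstep : ((k + 1) * a).val = ((k * a).val + a) % (a + b) := by
    rw [add_one_mul, ZMod.val_add, ZMod.val_natCast, Nat.add_mod_mod]
  have hlt := (k * a).val_lt
  simp only [windowWalk, hstep]
  rcases Nat.lt_or_ge ((k * a).val + a) (a + b) with h | h
  · left
    rw [Nat.mod_eq_of_lt h]
    push_cast
    ring
  · right
    rw [Nat.mod_eq_sub_mod h, Nat.mod_eq_of_lt (by omega)]
    omega

lemma add_one_le_two_mul_ncard_inter_Ico (hb : 0 < b) (hab : a.Coprime b) (hodd : Odd (a + b))
    {X : Set ℤ} (hXa : Hits X {0, (a : ℤ)}) (hXb : Hits X {0, (b : ℤ)}) (t : ℤ) :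
    a + b + 1 ≤ 2 * (X ∩ Ico t (t + (a + b : ℕ))).ncard := by
  rw [hits_pair_zero_iff] at hXa hXb
  have hcycle (k) : k ∈ windowWalk a b t ⁻¹' X ∨ k + 1 ∈ windowWalk a b t ⁻¹' X := by
    rcases windowWalk_add_one hb t k with h | h
    · simpa only [mem_preimage, h] using hXa (windowWalk a b t k)
    · simpa only [mem_preimage, ← h, or_comm] using hXb (windowWalk a b t (k + 1))
  have hinj : (windowWalk a b t ⁻¹' X).ncard ≤ (X ∩ Ico t (t + (a + b : ℕ))).ncard :=
    ncard_le_ncard_of_injOn _ (fun k hk => ⟨hk, windowWalk_mem_Ico hb t k⟩)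
      (windowWalk_injective hb hab t).injOn ((finite_Ico _ _).inter_of_right X)
  have := ZMod.add_one_le_two_mul_ncard_of_forall_or_add_one hodd hcycle
  omega

def optimalPattern (a b : ℕ) : Set ℤ :=
  {n | Even ((n : ZMod (a + b)) * (a : ZMod (a + b))⁻¹).val}

lemma hits_optimalPattern_left (hab : a.Coprime b) (hodd : Odd (a + b)) :
    Hits (optimalPattern a b) {0, (a : ℤ)} := by
  have hunit : (a : ZMod (a + b)) * (a : ZMod (a + b))⁻¹ = 1 :=
    ZMod.coe_mul_inv_eq_one a (Nat.coprime_self_add_right.mpr hab)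
  refine hits_pair_zero_iff.mpr fun n => ?_
  have h := ZMod.even_val_or_even_val_add_one hodd ((n : ZMod (a + b)) * (a : ZMod (a + b))⁻¹)
  simpa only [optimalPattern, mem_ofPred_eq, Int.cast_add, Int.cast_natCast, add_mul, hunit]
    using h

lemma hits_optimalPattern_right (hab : a.Coprime b) (hodd : Odd (a + b)) :
    Hits (optimalPattern a b) {0, (b : ℤ)} := by
  have hunit : (a : ZMod (a + b)) * (a : ZMod (a + b))⁻¹ = 1 :=
    ZMod.coe_mul_inv_eq_one a (Nat.coprime_self_add_right.mpr hab)
  have hba : (b : ZMod (a + b)) = -a := by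
    rw [eq_neg_iff_add_eq_zero, add_comm, ← Nat.cast_add, ZMod.natCast_self]
  refine hits_pair_zero_iff.mpr fun n => ?_
  have h := ZMod.even_val_or_even_val_add_one hodd ((n + b : ℤ) * (a : ZMod (a + b))⁻¹)
  simp only [Int.cast_add, Int.cast_natCast, add_mul, hba, neg_mul, hunit, neg_add_cancel_right]
    at h
  simpa only [optimalPattern, mem_ofPred_eq, Int.cast_add, Int.cast_natCast, add_mul, hba,
    neg_mul, hunit, or_comm] using h

lemma two_mul_ncard_optimalPattern_inter_Ico_le (hab : a.Coprime b) (hodd : Odd (a + b))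
    (t : ℤ) :
    2 * (optimalPattern a b ∩ Ico t (t + (a + b : ℕ))).ncard ≤ a + b + 1 := by
  have hunit : IsUnit (a : ZMod (a + b))⁻¹ :=
    (ZMod.unitOfCoprime a (Nat.coprime_self_add_right.mpr hab))⁻¹.isUnit
  have hinj : InjOn (fun n : ℤ => (n : ZMod (a + b)) * (a : ZMod (a + b))⁻¹)
      (optimalPattern a b ∩ Ico t (t + (a + b : ℕ))) := by
    rintro m ⟨-, hm₁, hm₂⟩ n ⟨-, hn₁, hn₂⟩ hmn
    have hdvd := (ZMod.intCast_eq_intCast_iff_dvd_sub m n _).mp (hunit.mul_right_cancel hmn)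
    have := Int.eq_zero_of_abs_lt_dvd hdvd (by rw [abs_lt]; constructor <;> omega)
    omega
  have : NeZero (a + b) := ⟨hodd.pos.ne'⟩
  have hle := ncard_le_ncard_of_injOn _ (fun n hn => hn.1) hinj
    (toFinite {s : ZMod (a + b) | Even s.val})
  have := ZMod.two_mul_ncard_setOf_even_val hodd
  omega

end Pattern

section Density

lemma ncard_inter_Ico_mul_eq_sum (X : Set ℤ) (t : ℤ) (M q : ℕ) :
    (X ∩ Ico t (t + q * M)).ncard =
      ∑ i ∈ Finset.range q, (X ∩ Ico (t + i * M) (t + i * M + M)).ncard := by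
  induction q with
  | zero => simp
  | succ q ih =>
    have hsplit : Ico t (t + (q + 1 : ℕ) * M) =
        Ico t (t + q * M) ∪ Ico (t + q * M) (t + q * M + M) := by
      rw [Ico_union_Ico_eq_Ico (le_add_of_nonneg_right (by positivity))
        (le_add_of_nonneg_right (by positivity))]
      push_cast
      ring_nf
    rw [Finset.sum_range_succ, ← ih, hsplit, inter_union_distrib_left,
      ncard_union_eq (Ico_disjoint_Ico_same.mono inter_subset_right inter_subset_right)
        ((finite_Ico _ _).inter_of_right X) ((finite_Ico _ _).inter_of_right X)]

lemma tendsto_div_two_mul_add_one (c : ℝ) :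
    Tendsto (fun N : ℕ => c / (2 * N + 1)) atTop (𝓝 0) :=
  tendsto_const_nhds.div_atTop <| tendsto_atTop_add_const_right _ _ <|
    tendsto_natCast_atTop_atTop.const_mul_atTop two_pos

lemma ncard_inter_Icc_neg_le (X : Set ℤ) (N : ℕ) :
    (X ∩ Icc (-(N : ℤ)) N).ncard ≤ 2 * N + 1 := by
  calc (X ∩ Icc (-(N : ℤ)) N).ncard ≤ (Icc (-(N : ℤ)) N).ncard :=
        ncard_le_ncard inter_subset_right (finite_Icc _ _)
    _ = 2 * N + 1 := by rw [← Finset.coe_Icc, ncard_coe_finset, Int.card_Icc]; omega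

variable {X : Set ℤ} {M : ℕ} {ρ : ℝ}

lemma mul_le_ncard_inter_Ico_mul (h : ∀ t : ℤ, ρ * M ≤ (X ∩ Ico t (t + M)).ncard)
    (t : ℤ) (q : ℕ) :
    (q * M : ℝ) * ρ ≤ (X ∩ Ico t (t + q * M)).ncard := by
  calc (q * M : ℝ) * ρ = ∑ _i ∈ Finset.range q, ρ * M := by simp; ring
    _ ≤ ∑ i ∈ Finset.range q, ((X ∩ Ico (t + i * M) (t + i * M + M)).ncard : ℝ) :=
      Finset.sum_le_sum fun i _ => h _
    _ = (X ∩ Ico t (t + q * M)).ncard := by rw [ncard_inter_Ico_mul_eq_sum]; push_cast; rfl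

lemma ncard_inter_Ico_mul_le (h : ∀ t : ℤ, (X ∩ Ico t (t + M)).ncard ≤ ρ * M)
    (t : ℤ) (q : ℕ) :
    (X ∩ Ico t (t + q * M)).ncard ≤ (q * M : ℝ) * ρ := by
  calc ((X ∩ Ico t (t + q * M)).ncard : ℝ)
      = ∑ i ∈ Finset.range q, ((X ∩ Ico (t + i * M) (t + i * M + M)).ncard : ℝ) := by
        rw [ncard_inter_Ico_mul_eq_sum]; push_cast; rfl
    _ ≤ ∑ _i ∈ Finset.range q, ρ * M := Finset.sum_le_sum fun i _ => h _
    _ = (q * M : ℝ) * ρ := by simp; ring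

lemma le_lowerDensity_of_forall_window (hM : 0 < M) (hρ : 0 ≤ ρ)
    (h : ∀ t : ℤ, ρ * M ≤ (X ∩ Ico t (t + M)).ncard) : ρ ≤ lowerDensity X := by
  have hbound (N : ℕ) :
      ρ - ρ * M / (2 * N + 1) ≤ (X ∩ Icc (-(N : ℤ)) N).ncard / (2 * N + 1) := by
    set q := (2 * N + 1) / M
    have hqM : q * M ≤ 2 * N + 1 := Nat.div_mul_le_self _ _
    have hq : (2 * N + 1 : ℝ) ≤ q * M + M := by exact_mod_cast (Nat.lt_div_mul_add hM).le
    have hsub : X ∩ Ico (-(N : ℤ)) (-N + (q : ℤ) * M) ⊆ X ∩ Icc (-(N : ℤ)) N :=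
      inter_subset_inter_right _ fun x hx => ⟨hx.1, by have := hx.2; omega⟩
    have hcount : (q * M : ℝ) * ρ ≤ (X ∩ Icc (-(N : ℤ)) N).ncard :=
      (mul_le_ncard_inter_Ico_mul h (-N) q).trans
      (by exact_mod_cast ncard_le_ncard hsub ((finite_Icc _ _).inter_of_right X))
    rw [sub_div' (by positivity), div_le_div_iff_of_pos_right (by positivity)]
    nlinarith
  have hg := (tendsto_div_two_mul_add_one (ρ * M)).const_sub ρ
  rw [sub_zero] at hg
  calc ρ = liminf (fun N : ℕ => ρ - ρ * M / (2 * N + 1)) atTop := hg.liminf_eq.symm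
    _ ≤ lowerDensity X :=
      liminf_le_liminf (.of_forall hbound) hg.isBoundedUnder_ge
        (isCoboundedUnder_ge_of_le atTop fun N => div_le_one_of_le₀
          (by exact_mod_cast ncard_inter_Icc_neg_le X N) (by positivity))

lemma lowerDensity_le_of_forall_window (hM : 0 < M)
    (h : ∀ t : ℤ, (X ∩ Ico t (t + M)).ncard ≤ ρ * M) : lowerDensity X ≤ ρ := by
  have hρ : 0 ≤ ρ := nonneg_of_mul_nonneg_left ((Nat.cast_nonneg _).trans (h 0)) (by positivity)
  have hbound (N : ℕ) :
      (X ∩ Icc (-(N : ℤ)) N).ncard / (2 * N + 1) ≤ ρ + ρ * M / (2 * N + 1) := by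
    set q := (2 * N + 1) / M + 1
    have hqM : 2 * N + 1 ≤ q * M := (Nat.lt_div_mul_add hM).le.trans (by rw [add_one_mul])
    have hq : (q * M : ℝ) ≤ 2 * N + 1 + M := by
      exact_mod_cast (add_one_mul ((2 * N + 1) / M) M).trans_le
        (Nat.add_le_add_right (Nat.div_mul_le_self _ _) M)
    have hsub : X ∩ Icc (-(N : ℤ)) N ⊆ X ∩ Ico (-(N : ℤ)) (-N + (q : ℤ) * M) :=
      inter_subset_inter_right _ fun x hx => ⟨hx.1, by have := hx.2; omega⟩
    have hcount : ((X ∩ Icc (-(N : ℤ)) N).ncard : ℝ) ≤ (q * M : ℝ) * ρ :=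
      (Nat.cast_le.mpr (ncard_le_ncard hsub ((finite_Ico _ _).inter_of_right X))).trans
        (ncard_inter_Ico_mul_le h (-N) q)
    rw [add_div' _ _ _ (by positivity), div_le_div_iff_of_pos_right (by positivity)]
    nlinarith
  have hg := (tendsto_div_two_mul_add_one (ρ * M)).const_add ρ
  rw [add_zero] at hg
  calc lowerDensity X ≤ liminf (fun N : ℕ => ρ + ρ * M / (2 * N + 1)) atTop :=
      liminf_le_liminf (.of_forall hbound) (isBoundedUnder_of ⟨0, fun N => by positivity⟩)
        hg.isCoboundedUnder_ge
    _ = ρ := hg.liminf_eq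

end Density

lemma piercing_pair_eq {a b : ℕ} (hb : 0 < b) (hab : a.Coprime b) (hodd : Odd (a + b)) :
    piercing {{0, (a : ℤ)}, {0, (b : ℤ)}} = (a + b + 1 : ℝ) / (2 * (a + b)) := by
  set ρ : ℝ := (a + b + 1) / (2 * (a + b))
  have hρ : ρ * (a + b : ℕ) = (a + b + 1 : ℕ) / 2 := by
    have : (0 : ℝ) < a + b := by exact_mod_cast hodd.pos
    simp only [ρ]
    push_cast
    field_simp
  have hlower {X : Set ℤ} (hXa : Hits X {0, (a : ℤ)}) (hXb : Hits X {0, (b : ℤ)}) :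
      ρ ≤ lowerDensity X :=
    le_lowerDensity_of_forall_window hodd.pos (by positivity) fun t => by
      rw [hρ, div_le_iff₀ two_pos, mul_comm]
      exact_mod_cast add_one_le_two_mul_ncard_inter_Ico hb hab hodd hXa hXb t
  have hupper : lowerDensity (optimalPattern a b) ≤ ρ :=
    lowerDensity_le_of_forall_window hodd.pos fun t => by
      rw [hρ, le_div_iff₀ two_pos, mul_comm]
      exact_mod_cast two_mul_ncard_optimalPattern_inter_Ico_le hab hodd t
  have hhits : {X | ∀ S ∈ ({{0, (a : ℤ)}, {0, (b : ℤ)}} : Set (Set ℤ)), Hits X S} =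
      {X | Hits X {0, (a : ℤ)} ∧ Hits X {0, (b : ℤ)}} := by
    simp only [forall_mem_insert, mem_singleton_iff, forall_eq]
  have hleft := hits_optimalPattern_left hab hodd
  have hright := hits_optimalPattern_right hab hodd
  unfold piercing
  rw [hhits]
  refine IsLeast.csInf_eq ⟨⟨optimalPattern a b, ⟨hleft, hright⟩,
    le_antisymm hupper (hlower hleft hright)⟩, ?_⟩
  rintro _ ⟨X, ⟨hXa, hXb⟩, rfl⟩
  exact hlower hXa hXb

theorem stmt2 (a b : ℤ) (ha : 0 < a) (hb : 0 < b) (hcop : IsCoprime a b)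
    (hodd : Odd (a + b)) :
    piercing {{0, a}, {0, b}} = (a + b + 1 : ℝ) / (2 * (a + b)) := by
  lift a to ℕ using ha.le
  lift b to ℕ using hb.le
  push_cast
  exact piercing_pair_eq (by exact_mod_cast hb) (Nat.isCoprime_iff_coprime.mp hcop)
    (by exact_mod_cast hodd)
end

section
/- For integers n ≥ 1 and k ≥ 2, the supremum M_k^n of π(F) over all families F of n ships of size k in ℤ satisfies M_k^n ≥ 1 - e / n^{1/(k-1)}. -/
/-!
Let `t = k - 1` and take blocks of `m = max t ⌊(n t!)^{1/t}⌋ + 1` consecutive integers. The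
`k`-subsets of `{0, …, m-1}` containing `0` number `C(m-1, t) ≤ (m-1)^t / t! ≤ n`, and every
`k`-subset of any block is a translate of one of them. A pattern hitting all of them therefore
misses at most `t` cells of each block, so its lower density is at least `1 - t/m`, and
`t! ≥ (t/e)^t` gives `t/m ≤ e / n^{1/t}`.
-/

open Finset Filter Real
open scoped Classical

noncomputable def centeredDensity (X : Set ℤ) (N : ℕ) : ℝ :=
  ((X ∩ Set.Icc (-(N : ℤ)) N).ncard : ℝ) / (2 * N + 1)

lemma ncard_inter_Icc (X : Set ℤ) (N : ℕ) :
    (X ∩ Set.Icc (-(N : ℤ)) N).ncard = #{x ∈ Icc (-(N : ℤ)) N | x ∈ X} := by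
  rw [← Set.ncard_coe_finset, coe_filter]
  congr 1
  ext x
  simp only [Set.mem_inter_iff, Set.mem_ofPred_eq, mem_Icc, Set.mem_Icc]
  tauto

lemma card_Icc_neg_self (N : ℕ) : #(Icc (-(N : ℤ)) N) = 2 * N + 1 := by
  rw [Int.card_Icc]
  omega

lemma centeredDensity_nonneg (X : Set ℤ) (N : ℕ) : 0 ≤ centeredDensity X N := by
  unfold centeredDensity
  positivity

lemma centeredDensity_le_one (X : Set ℤ) (N : ℕ) : centeredDensity X N ≤ 1 := by
  rw [centeredDensity, div_le_one (by positivity), ncard_inter_Icc]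
  exact_mod_cast (card_filter_le _ _).trans (card_Icc_neg_self N).le

lemma isCoboundedUnder_ge_centeredDensity (X : Set ℤ) :
    IsCoboundedUnder (· ≥ ·) atTop (centeredDensity X) :=
  isCoboundedUnder_ge_of_le _ (centeredDensity_le_one X)

lemma lowerDensity_nonneg (X : Set ℤ) : 0 ≤ lowerDensity X :=
  le_liminf_of_le (isCoboundedUnder_ge_centeredDensity X)
    (Eventually.of_forall (centeredDensity_nonneg X))

lemma lowerDensity_le_one (X : Set ℤ) : lowerDensity X ≤ 1 :=
  liminf_le_of_le (isBoundedUnder_of ⟨0, centeredDensity_nonneg X⟩) fun _ hb =>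
    let ⟨N, hN⟩ := hb.exists
    hN.trans (centeredDensity_le_one X N)

section BlockMisses

variable {X : Set ℤ} {m r : ℕ}

lemma card_filter_not_mem_Ico_mul_le (h : ∀ a : ℤ, #{x ∈ Ico a (a + m) | x ∉ X} ≤ r)
    (q : ℕ) (a : ℤ) :
    #{x ∈ Ico a (a + q * m) | x ∉ X} ≤ q * r := by
  induction q with
  | zero => simp
  | succ q ih =>
    have hsplit : Ico a (a + (q + 1 : ℕ) * m) =
        Ico a (a + q * m) ∪ Ico (a + q * m) (a + q * m + m) := by
      rw [Ico_union_Ico_eq_Ico (le_add_of_nonneg_right (by positivity)) (by omega)]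
      push_cast; ring_nf
    rw [hsplit, filter_union, add_mul, one_mul]
    exact (card_union_le _ _).trans (add_le_add ih (h _))

lemma sub_le_centeredDensity (h : ∀ a : ℤ, #{x ∈ Ico a (a + m) | x ∉ X} ≤ r)
    (hm : 0 < m) (N : ℕ) :
    1 - r / m - r / (2 * N + 1) ≤ centeredDensity X N := by
  set q := 2 * N / m + 1
  set misses := #{x ∈ Icc (-(N : ℤ)) N | x ∉ X}
  have hmisses : misses ≤ q * r := by
    refine (card_le_card (filter_subset_filter _ fun x hx => ?_)).trans
      (card_filter_not_mem_Ico_mul_le h q (-N))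
    have : 2 * N < q * m := by
      simpa only [q, add_mul, one_mul] using Nat.lt_div_mul_add (a := 2 * N) hm
    simp only [mem_Icc, mem_Ico] at hx ⊢
    constructor <;> omega
  have hsum : #{x ∈ Icc (-(N : ℤ)) N | x ∈ X} + misses = 2 * N + 1 := by
    rw [card_filter_add_card_filter_not, card_Icc_neg_self]
  have hq : (q : ℝ) ≤ 2 * N / m + 1 := by
    have : ((2 * N / m : ℕ) : ℝ) ≤ ((2 * N : ℕ) : ℝ) / m := Nat.cast_div_le
    push_cast [q] at this ⊢
    linarith
  have hmisses' : (misses : ℝ) ≤ (2 * N / m + 1) * r :=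
    calc (misses : ℝ) ≤ q * r := by exact_mod_cast hmisses
      _ ≤ (2 * N / m + 1) * r := by gcongr
  have hsum' : (#{x ∈ Icc (-(N : ℤ)) N | x ∈ X} : ℝ) = 2 * N + 1 - misses := by
    rw [eq_sub_iff_add_eq]
    exact_mod_cast hsum
  have hr : (2 * N / m : ℝ) * r ≤ r / m * (2 * N + 1) := by
    rw [div_mul_eq_mul_div, div_mul_eq_mul_div, mul_comm (r : ℝ)]
    gcongr
    linarith
  rw [centeredDensity, ncard_inter_Icc, hsum', le_div_iff₀ (by positivity), sub_mul, sub_mul,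
    div_mul_cancel₀ _ (by positivity)]
  linarith

lemma one_sub_div_le_lowerDensity (h : ∀ a : ℤ, #{x ∈ Ico a (a + m) | x ∉ X} ≤ r)
    (hm : 0 < m) : 1 - r / m ≤ lowerDensity X := by
  have hdenom : Tendsto (fun N : ℕ => 2 * (N : ℝ) + 1) atTop atTop :=
    tendsto_atTop_add_const_right _ _ (tendsto_natCast_atTop_atTop.const_mul_atTop two_pos)
  have hlim : Tendsto (fun N : ℕ => 1 - r / m - r / (2 * (N : ℝ) + 1)) atTop
      (nhds (1 - r / m)) := by
    simpa using tendsto_const_nhds.sub (tendsto_const_nhds.div_atTop hdenom)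
  calc 1 - r / m = liminf (fun N : ℕ => 1 - r / m - r / (2 * (N : ℝ) + 1)) atTop :=
        hlim.liminf_eq.symm
    _ ≤ lowerDensity X :=
        liminf_le_liminf (Eventually.of_forall (sub_le_centeredDensity h hm))
          hlim.isBoundedUnder_ge (isCoboundedUnder_ge_centeredDensity X)

end BlockMisses

lemma div_exp_one_pow_le_factorial (t : ℕ) : ((t : ℝ) / exp 1) ^ t ≤ t.factorial := by
  have := pow_div_factorial_le_exp (t : ℝ) (by positivity) t
  rw [div_le_iff₀ (by positivity)] at this
  rw [div_pow, ← exp_nat_mul, mul_one, div_le_iff₀ (by positivity)]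
  linarith

lemma choose_floor_rpow_le (n : ℕ) {t : ℕ} (ht : t ≠ 0) :
    (⌊((n * t.factorial : ℕ) : ℝ) ^ (t⁻¹ : ℝ)⌋₊).choose t ≤ n := by
  set A : ℝ := ((n * t.factorial : ℕ) : ℝ) ^ (t⁻¹ : ℝ)
  have hA : 0 ≤ A := by positivity
  have : ((⌊A⌋₊.choose t : ℕ) : ℝ) ≤ n :=
    calc ((⌊A⌋₊.choose t : ℕ) : ℝ) ≤ (⌊A⌋₊ : ℝ) ^ t / t.factorial := Nat.choose_le_pow_div t _
      _ ≤ A ^ t / t.factorial := by gcongr; exact Nat.floor_le hA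
      _ = n := by
        rw [rpow_inv_natCast_pow (by positivity) ht]
        push_cast
        field_simp
  exact_mod_cast this

lemma mul_rpow_inv_le_exp_one_mul (n : ℕ) {t : ℕ} (ht : t ≠ 0) :
    t * (n : ℝ) ^ (t⁻¹ : ℝ) ≤ exp 1 * ((n * t.factorial : ℕ) : ℝ) ^ (t⁻¹ : ℝ) := by
  have hfact : (t : ℝ) / exp 1 ≤ (t.factorial : ℝ) ^ (t⁻¹ : ℝ) := by
    calc (t : ℝ) / exp 1 = (((t : ℝ) / exp 1) ^ t) ^ (t⁻¹ : ℝ) :=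
          (pow_rpow_inv_natCast (by positivity) ht).symm
      _ ≤ (t.factorial : ℝ) ^ (t⁻¹ : ℝ) := by gcongr; exact div_exp_one_pow_le_factorial t
  rw [Nat.cast_mul, mul_rpow (by positivity) (by positivity)]
  rw [div_le_iff₀ (exp_pos 1)] at hfact
  have : 0 ≤ (n : ℝ) ^ (t⁻¹ : ℝ) := by positivity
  nlinarith

lemma exists_block_length {n : ℕ} (hn : 1 ≤ n) {t : ℕ} (ht : t ≠ 0) :
    ∃ m : ℕ, t < m ∧ (m - 1).choose t ≤ n ∧ t / (m : ℝ) ≤ exp 1 / (n : ℝ) ^ (t⁻¹ : ℝ) := by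
  set A : ℝ := ((n * t.factorial : ℕ) : ℝ) ^ (t⁻¹ : ℝ)
  refine ⟨max t ⌊A⌋₊ + 1, by omega, ?_, ?_⟩
  · rcases max_cases t ⌊A⌋₊ with ⟨h, -⟩ | ⟨h, -⟩ <;> rw [Nat.add_sub_cancel, h]
    · simpa using hn
    · exact choose_floor_rpow_le n ht
  · have hAm : A < (max t ⌊A⌋₊ + 1 : ℕ) := by
      push_cast
      exact (Nat.lt_floor_add_one A).trans_le (by gcongr; exact_mod_cast le_max_right _ _)
    rw [div_le_div_iff₀ (by positivity) (by positivity)]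
    calc (t : ℝ) * (n : ℝ) ^ (t⁻¹ : ℝ) ≤ exp 1 * A := mul_rpow_inv_le_exp_one_mul n ht
      _ ≤ exp 1 * (max t ⌊A⌋₊ + 1 : ℕ) := by gcongr

noncomputable def blockShips (m k : ℕ) : Finset (Finset ℤ) :=
  {s ∈ (Ico 0 (m : ℤ)).powersetCard k | 0 ∈ s}

lemma mem_blockShips {m k : ℕ} {s : Finset ℤ} :
    s ∈ blockShips m k ↔ s ⊆ Ico 0 (m : ℤ) ∧ #s = k ∧ 0 ∈ s := by
  rw [blockShips, mem_filter, mem_powersetCard, and_assoc]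

lemma card_blockShips_le (m k : ℕ) : #(blockShips m k) ≤ (m - 1).choose (k - 1) := by
  have hsub : blockShips m k ⊆ ((Ioo 0 (m : ℤ)).powersetCard (k - 1)).image (insert 0) := by
    intro s hs
    obtain ⟨hsm, rfl, h0⟩ := mem_blockShips.mp hs
    refine mem_image.mpr ⟨s.erase 0, mem_powersetCard.mpr ⟨fun x hx => ?_, card_erase_of_mem h0⟩,
      insert_erase h0⟩
    have := mem_Ico.mp (hsm (mem_of_mem_erase hx))
    exact mem_Ioo.mpr ⟨this.1.lt_of_ne (ne_of_mem_erase hx).symm, this.2⟩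
  calc #(blockShips m k) ≤ #(((Ioo 0 (m : ℤ)).powersetCard (k - 1)).image (insert 0)) :=
        card_le_card hsub
    _ ≤ (m - 1).choose (k - 1) := by
        refine card_image_le.trans_eq ?_
        rw [card_powersetCard, Int.card_Ioo]
        congr
        omega

lemma Ico_zero_mem_blockShips {m k : ℕ} (hk : 0 < k) (hkm : k ≤ m) :
    Ico 0 (k : ℤ) ∈ blockShips m k :=
  mem_blockShips.mpr ⟨Ico_subset_Ico_right (by omega), by simp, by simp [hk]⟩

lemma card_filter_not_mem_Ico_le_of_hits {X : Set ℤ} {m k : ℕ} (hk : 0 < k)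
    (H : ∀ s ∈ blockShips m k, Hits X s) (a : ℤ) : #{x ∈ Ico a (a + m) | x ∉ X} ≤ k - 1 := by
  by_contra! hlt
  -- `k` misses in one block, shifted by their minimum, form a ship that `X` does not hit.
  obtain ⟨C, hCsub, hCcard⟩ :=
    exists_subset_card_eq (show k ≤ #{x ∈ Ico a (a + m) | x ∉ X} by omega)
  have hC : C.Nonempty := card_pos.mp (by omega)
  have hmem : ∀ c ∈ C, c ∈ Ico a (a + m) ∧ c ∉ X := fun c hc => mem_filter.mp (hCsub hc)
  set c₀ := C.min' hC
  have hship : C.image (· - c₀) ∈ blockShips m k := by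
    refine mem_blockShips.mpr ⟨fun x hx => ?_, ?_, mem_image.mpr ⟨c₀, C.min'_mem hC, sub_self _⟩⟩
    · obtain ⟨c, hc, rfl⟩ := mem_image.mp hx
      have h₁ := mem_Ico.mp (hmem c hc).1
      have h₂ := mem_Ico.mp (hmem c₀ (C.min'_mem hC)).1
      have h₃ := C.min'_le c hc
      exact mem_Ico.mpr ⟨by omega, by omega⟩
    · rw [card_image_of_injective _ (sub_left_injective), hCcard]
  obtain ⟨_, hx, hX⟩ := H _ hship c₀
  obtain ⟨c, hc, rfl⟩ := mem_image.mp hx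
  exact (hmem c hc).2 (by simpa using hX)

lemma hits_univ {S : Set ℤ} (hS : S.Nonempty) : Hits Set.univ S :=
  fun _ => ⟨hS.some, hS.some_mem, trivial⟩

lemma piercing_le_one {F : Set (Set ℤ)} (hF : ∀ S ∈ F, S.Nonempty) : piercing F ≤ 1 := by
  have hbdd : BddBelow (lowerDensity '' {X | ∀ S ∈ F, Hits X S}) := by
    refine ⟨0, ?_⟩
    rintro _ ⟨X, -, rfl⟩
    exact lowerDensity_nonneg X
  exact (csInf_le hbdd ⟨Set.univ, fun S hS => hits_univ (hF S hS), rfl⟩).trans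
    (lowerDensity_le_one _)

lemma one_sub_div_le_piercing {F : Set (Set ℤ)} {m k : ℕ} (hm : 0 < m) (hk : 0 < k)
    (hF : ∀ S ∈ F, S.Nonempty) (hships : ∀ s ∈ blockShips m k, (s : Set ℤ) ∈ F) :
    1 - ((k - 1 : ℕ) : ℝ) / m ≤ piercing F := by
  refine le_csInf ⟨_, Set.univ, fun S hS => hits_univ (hF S hS), rfl⟩ ?_
  rintro _ ⟨X, hX, rfl⟩
  exact one_sub_div_le_lowerDensity
    (card_filter_not_mem_Ico_le_of_hits hk fun s hs => hX _ (hships s hs)) hm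

lemma Finset.exists_fin_range_eq {α : Type*} {n : ℕ} (s : Finset α) (hs : s.Nonempty)
    (hn : #s ≤ n) :
    ∃ f : Fin n → α, Set.range f = s := by
  obtain ⟨d, hd⟩ := hs
  refine ⟨fun i => s.toList.getD i d, Set.Subset.antisymm ?_ fun x hx => ?_⟩
  · rintro _ ⟨i, rfl⟩
    show s.toList.getD i d ∈ s
    rw [List.getD_eq_getElem?_getD]
    cases h : s.toList[(i : ℕ)]? with
    | none => exact hd
    | some x => simpa using List.mem_of_getElem? h
  · obtain ⟨i, hi, rfl⟩ := List.mem_iff_getElem.mp (mem_toList.mpr hx)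
    exact ⟨⟨i, (length_toList s ▸ hi).trans_le hn⟩, by simp [List.getElem?_eq_getElem hi]⟩

lemma exists_fin_blockShips {n m k : ℕ} (hk : 0 < k) (hkm : k ≤ m)
    (hcard : #(blockShips m k) ≤ n) :
    ∃ T : Fin n → Set ℤ, (∀ i, (T i).Finite ∧ (T i).ncard = k) ∧
      ∀ s ∈ blockShips m k, (s : Set ℤ) ∈ Set.range T := by
  obtain ⟨T, hT⟩ := ((blockShips m k).image ((↑) : Finset ℤ → Set ℤ)).exists_fin_range_eq
    ⟨_, mem_image_of_mem _ (Ico_zero_mem_blockShips hk hkm)⟩ (card_image_le.trans hcard)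
  refine ⟨T, fun i => ?_, fun s hs => hT ▸ mem_coe.mpr (mem_image_of_mem _ hs)⟩
  obtain ⟨s, hs, hsT⟩ : ∃ s ∈ blockShips m k, (s : Set ℤ) = T i := by
    simpa using hT.subset (Set.mem_range_self i)
  rw [← hsT, Set.ncard_coe_finset, (mem_blockShips.mp hs).2.1]
  exact ⟨s.finite_toSet, rfl⟩

lemma bddAbove_piercing_fin (n : ℕ) {k : ℕ} (hk : 0 < k) :
    BddAbove {x : ℝ | ∃ T : Fin n → Set ℤ, (∀ i, (T i).Finite ∧ (T i).ncard = k) ∧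
      x = piercing {S | ∃ i, S = T i}} := by
  refine ⟨1, ?_⟩
  rintro _ ⟨T, hT, rfl⟩
  refine piercing_le_one ?_
  rintro _ ⟨i, rfl⟩
  exact Set.nonempty_of_ncard_ne_zero (by rw [(hT i).2]; omega)

theorem stmt10 (n k : ℕ) (hn : 1 ≤ n) (hk : 2 ≤ k) :
    1 - Real.exp 1 / (n : ℝ) ^ ((1 : ℝ) / (k - 1)) ≤
      sSup {x : ℝ | ∃ T : Fin n → Set ℤ, (∀ i, (T i).Finite ∧ (T i).ncard = k) ∧
        x = piercing {S | ∃ i, S = T i}} := by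
  obtain ⟨m, hkm, hchoose, hbound⟩ := exists_block_length hn (t := k - 1) (by omega)
  obtain ⟨T, hT, hships⟩ := exists_fin_blockShips (n := n) (by omega) (by omega)
    ((card_blockShips_le m k).trans hchoose)
  have hpiercing : 1 - ((k - 1 : ℕ) : ℝ) / m ≤ piercing {S | ∃ i, S = T i} :=
    one_sub_div_le_piercing (by omega) (by omega)
      (fun _ ⟨i, hi⟩ => hi ▸ Set.nonempty_of_ncard_ne_zero (by rw [(hT i).2]; omega))
      (fun s hs => let ⟨i, hi⟩ := hships s hs; ⟨i, hi.symm⟩)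
  refine le_trans ?_ (le_csSup (bddAbove_piercing_fin n (by omega)) ⟨T, hT, rfl⟩)
  rw [Nat.cast_pred (by omega)] at hbound hpiercing
  rw [one_div]
  linarith
end

section
/- Let a, b be coprime positive integers with a + b odd and F = {{0,a},{0,b}}. Any shooting pattern X ⊆ ℤ for F satisfies: in every block of a+b consecutive integers {m, m+1, ..., m+a+b-1} together with the periodicity constraints, at least (a+b+1)/2 residues mod (a+b) must contain shots infinitely often; consequently the lower asymptotic density of X is at least (a+b+1)/(2(a+b)). -/
open Set Filter Topology

theorem ncard_le_two_mul_ncard_of_forall_mem_or_mem {α : Type*} {U S : Set α} {f : α → α}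
    (hU : U.Finite) (hSU : S ⊆ U)
    (hf : InjOn f U) (hcov : ∀ j ∈ U, j ∈ S ∨ f j ∈ S) : U.ncard ≤ 2 * S.ncard := by
  have hmaps : ∀ j ∈ U \ S, f j ∈ S := fun j hj => (hcov j hj.1).resolve_left hj.2
  have hle : (U \ S).ncard ≤ S.ncard :=
    ncard_le_ncard_of_injOn f hmaps (hf.mono sdiff_subset) (hU.subset hSU)
  rw [ncard_sdiff hSU (hU.subset hSU)] at hle
  omega

theorem ncard_Ico_int (m n : ℤ) : (Ico m n).ncard = (n - m).toNat := by
  rw [ncard_eq_toFinset_card', toFinset_Ico, Int.card_Ico]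

theorem ncard_Icc_int (m n : ℤ) : (Icc m n).ncard = (n + 1 - m).toNat := by
  rw [ncard_eq_toFinset_card', toFinset_Icc, Int.card_Icc]

theorem injOn_add_emod_Ico (a p : ℤ) : InjOn (fun j => (j + a) % p) (Ico 0 p) := by
  intro x hx y hy hxy
  have hmod : x ≡ y [ZMOD p] := Int.ModEq.add_right_cancel' a hxy
  rwa [Int.ModEq, Int.emod_eq_of_lt hx.1 hx.2, Int.emod_eq_of_lt hy.1 hy.2] at hmod

theorem add_one_div_two_le_ncard_of_forall_mem_or_add_emod_mem {p a : ℤ} (hp : 0 < p)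
    (hodd : Odd p) {S : Set ℤ} (hS : S ⊆ Ico 0 p)
    (hcov : ∀ j ∈ Ico 0 p, j ∈ S ∨ (j + a) % p ∈ S) : ((p : ℝ) + 1) / 2 ≤ S.ncard := by
  have h := ncard_le_two_mul_ncard_of_forall_mem_or_mem (finite_Ico 0 p) hS
    (injOn_add_emod_Ico a p) hcov
  rw [ncard_Ico_int] at h
  obtain ⟨t, rfl⟩ := hodd
  have ht : (t : ℝ) + 1 ≤ S.ncard := by exact_mod_cast (show t + 1 ≤ (S.ncard : ℤ) by omega)
  push_cast
  linarith

theorem Hits.mem_or_add_mem {X : Set ℤ} {a : ℤ} (h : Hits X {0, a}) (n : ℤ) :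
    n ∈ X ∨ n + a ∈ X := by
  obtain ⟨s, rfl | rfl, hs⟩ := h n
  · exact .inl (by simpa using hs)
  · exact .inr hs

theorem Hits.preimage_const_add {X S : Set ℤ} (h : Hits X S) (m : ℤ) :
    Hits ((m + ·) ⁻¹' X) S := fun n => by
  obtain ⟨s, hs, hX⟩ := h (m + n)
  exact ⟨s, hs, by simpa [mem_preimage, add_assoc] using hX⟩

def recurrentResidues (X : Set ℤ) (p : ℤ) : Set ℤ :=
  {r | 0 ≤ r ∧ r < p ∧ ∀ m : ℤ, ∃ n ∈ X, m ≤ n ∧ n % p = r}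

theorem exists_ge_emod_eq (M : ℤ) {p r : ℤ} (hr : 0 ≤ r) (hrp : r < p) :
    ∃ n, M ≤ n ∧ n % p = r :=
  ⟨M + (r - M) % p, le_add_of_nonneg_right (Int.emod_nonneg _ (by omega)), by
    rw [Int.add_emod_emod, add_sub_cancel, Int.emod_eq_of_lt hr hrp]⟩

theorem mem_recurrentResidues_or_add_emod_mem {X : Set ℤ} {a p : ℤ} (hp : 0 < p)
    (hX : Hits X {0, a}) {r : ℤ} (hr : r ∈ Ico 0 p) :
    r ∈ recurrentResidues X p ∨ (r + a) % p ∈ recurrentResidues X p := by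
  by_contra! h
  obtain ⟨hr₁, hr₂⟩ := h
  simp only [recurrentResidues, mem_ofPred_eq, not_and, not_forall, not_exists] at hr₁ hr₂
  obtain ⟨m₁, hm₁⟩ := hr₁ hr.1 hr.2
  obtain ⟨m₂, hm₂⟩ := hr₂ (Int.emod_nonneg _ hp.ne') (Int.emod_lt_of_pos _ hp)
  obtain ⟨n, hn, hnr⟩ := exists_ge_emod_eq (max m₁ (m₂ - a)) hr.1 hr.2
  rcases hX.mem_or_add_mem n with hnX | hnX
  · exact hm₁ n hnX (by omega) hnr
  · exact hm₂ (n + a) hnX (by omega) (by rw [← Int.emod_add_emod, hnr])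

theorem add_one_div_two_le_ncard_recurrentResidues {X : Set ℤ} {a p : ℤ} (hp : 0 < p)
    (hodd : Odd p) (hX : Hits X {0, a}) :
    ((p : ℝ) + 1) / 2 ≤ (recurrentResidues X p).ncard :=
  add_one_div_two_le_ncard_of_forall_mem_or_add_emod_mem hp hodd (fun _ hr => ⟨hr.1, hr.2.1⟩)
    fun _ => mem_recurrentResidues_or_add_emod_mem hp hX

theorem mem_or_add_emod_mem_of_hits {X : Set ℤ} {a b : ℤ} (ha : 0 < a) (hb : 0 < b)
    (hXa : Hits X {0, a}) (hXb : Hits X {0, b}) {j : ℤ} (hj : j ∈ Ico 0 (a + b)) :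
    j ∈ X ∨ (j + a) % (a + b) ∈ X := by
  obtain ⟨hj₀, hj₁⟩ := hj
  by_cases hjb : j < b
  · rw [Int.emod_eq_of_lt (by omega) (by omega)]
    exact hXa.mem_or_add_mem j
  · rw [show j + a = j - b + (a + b) * 1 by ring, Int.add_mul_emod_self_left,
      Int.emod_eq_of_lt (by omega) (by omega)]
    simpa [or_comm] using hXb.mem_or_add_mem (j - b)

theorem ncard_preimage_const_add_inter_Ico (X : Set ℤ) (m p : ℤ) :
    ((m + ·) ⁻¹' X ∩ Ico 0 p).ncard = (X ∩ Ico m (m + p)).ncard := by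
  rw [← ncard_image_of_injective _ (add_right_injective m), image_inter (add_right_injective m),
    image_preimage_eq X (add_left_surjective m), image_const_add_Ico, add_zero]

theorem add_one_div_two_le_ncard_inter_Ico {X : Set ℤ} {a b : ℤ} (ha : 0 < a) (hb : 0 < b)
    (hodd : Odd (a + b)) (hXa : Hits X {0, a}) (hXb : Hits X {0, b}) (m : ℤ) :
    ((a + b : ℤ) + 1 : ℝ) / 2 ≤ (X ∩ Ico m (m + (a + b))).ncard := by
  rw [← ncard_preimage_const_add_inter_Ico]
  refine add_one_div_two_le_ncard_of_forall_mem_or_add_emod_mem (a := a) (by omega) hodd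
    inter_subset_right fun j hj => ?_
  have hmod : (j + a) % (a + b) ∈ Ico 0 (a + b) :=
    ⟨Int.emod_nonneg _ (by omega), Int.emod_lt_of_pos _ (by omega)⟩
  exact (mem_or_add_emod_mem_of_hits ha hb (hXa.preimage_const_add m)
    (hXb.preimage_const_add m) hj).imp (⟨·, hj⟩) (⟨·, hmod⟩)

section Density

variable {X : Set ℤ} {p : ℤ} {c : ℝ}

theorem mul_le_ncard_inter_Ico_of_forall_le (hp : 0 ≤ p)
    (h : ∀ m, c ≤ (X ∩ Ico m (m + p)).ncard) (m : ℤ) (k : ℕ) :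
    k * c ≤ (X ∩ Ico m (m + k * p)).ncard := by
  induction k with
  | zero => simp
  | succ k ih =>
    have hsplit : Ico m (m + (k + 1 : ℕ) * p) =
        Ico m (m + k * p) ∪ Ico (m + k * p) (m + k * p + p) := by
      rw [Ico_union_Ico_eq_Ico (by nlinarith) (by omega)]
      push_cast; ring_nf
    rw [hsplit, inter_union_distrib_left, ncard_union_eq
      (Ico_disjoint_Ico_same.mono inter_subset_right inter_subset_right)
      ((finite_Ico _ _).inter_of_right _) ((finite_Ico _ _).inter_of_right _)]
    push_cast
    linarith [h (m + k * p)]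

theorem ncard_inter_Icc_le (X : Set ℤ) (N : ℕ) :
    ((X ∩ Icc (-(N : ℤ)) N).ncard : ℝ) ≤ 2 * N + 1 := by
  have h := ncard_le_ncard (inter_subset_right (s := X)) (finite_Icc (-(N : ℤ)) N)
  rw [ncard_Icc_int] at h
  exact_mod_cast (show ((X ∩ Icc (-(N : ℤ)) N).ncard : ℤ) ≤ 2 * N + 1 by omega)

theorem le_lowerDensity_of_forall_le_ncard_inter_Ico (hp : 0 < p) (hc : 0 ≤ c)
    (h : ∀ m, c ≤ (X ∩ Ico m (m + p)).ncard) : c / p ≤ lowerDensity X := by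
  have hbound : ∀ N : ℕ, c / p - c / (2 * N + 1) ≤
      ((X ∩ Icc (-(N : ℤ)) N).ncard : ℝ) / (2 * N + 1) := by
    intro N
    obtain ⟨k, hk⟩ : ∃ k : ℕ, (k : ℤ) = (2 * N + 1) / p :=
      ⟨_, Int.toNat_of_nonneg (Int.ediv_nonneg (by omega) hp.le)⟩
    have hkp : (k : ℤ) * p ≤ 2 * N + 1 := hk ▸ Int.ediv_mul_le _ hp.ne'
    have hkp' : 2 * N + 1 < ((k : ℤ) + 1) * p := hk ▸ Int.lt_ediv_add_one_mul_self _ hp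
    have hblock := mul_le_ncard_inter_Ico_of_forall_le hp.le h (-N) k
    have hsub : X ∩ Ico (-(N : ℤ)) (-N + k * p) ⊆ X ∩ Icc (-(N : ℤ)) N :=
      inter_subset_inter_right _ fun x hx => ⟨hx.1, by linarith [hx.2]⟩
    have hmono := ncard_le_ncard hsub ((finite_Icc _ _).inter_of_right _)
    have hN : (0 : ℝ) < 2 * N + 1 := by positivity
    have hkpR : (2 * N + 1 : ℝ) < (k + 1) * p := by exact_mod_cast hkp'
    have hcp : c / p * (2 * N + 1) ≤ c * (k + 1) := by
      rw [div_mul_eq_mul_div, div_le_iff₀ (by exact_mod_cast hp)]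
      nlinarith
    rw [le_div_iff₀ hN, sub_mul, div_mul_cancel₀ _ hN.ne']
    have : (k : ℝ) * c ≤ (X ∩ Icc (-(N : ℤ)) N).ncard := hblock.trans (by exact_mod_cast hmono)
    linarith
  have hlim : Tendsto (fun N : ℕ => c / p - c / (2 * N + 1)) atTop (𝓝 (c / p)) := by
    have hden : Tendsto (fun N : ℕ => (2 * N + 1 : ℝ)) atTop atTop :=
      tendsto_atTop_add_const_right _ _ (tendsto_natCast_atTop_atTop.const_mul_atTop two_pos)
    simpa using (tendsto_const_nhds (x := c / p)).sub (tendsto_const_nhds.div_atTop hden)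
  rw [← hlim.liminf_eq]
  exact liminf_le_liminf (.of_forall hbound) hlim.isBoundedUnder_ge
    (isCoboundedUnder_ge_of_le _ fun N => (div_le_one (by positivity)).2 (ncard_inter_Icc_le X N))

end Density

theorem stmt19_general (a b : ℤ) (ha : 0 < a) (hb : 0 < b)
    (hodd : Odd (a + b)) (X : Set ℤ) (hXa : Hits X {0, a}) (hXb : Hits X {0, b}) :
    ((a + b + 1 : ℝ) / 2 ≤
      ({r : ℤ | 0 ≤ r ∧ r < a + b ∧ ∀ m : ℤ, ∃ n ∈ X, m ≤ n ∧ n % (a + b) = r}).ncard) ∧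
    (a + b + 1 : ℝ) / (2 * (a + b)) ≤ lowerDensity X := by
  have hp : 0 < a + b := by omega
  constructor
  · have hres := add_one_div_two_le_ncard_recurrentResidues hp hodd hXa
    push_cast at hres
    exact hres
  · have hwindow := add_one_div_two_le_ncard_inter_Ico ha hb hodd hXa hXb
    have hdensity := le_lowerDensity_of_forall_le_ncard_inter_Ico hp (by positivity) hwindow
    convert hdensity using 1
    push_cast
    field_simp

theorem stmt19 (a b : ℤ) (ha : 0 < a) (hb : 0 < b) (hcop : IsCoprime a b)
    (hodd : Odd (a + b)) (X : Set ℤ) (hXa : Hits X {0, a}) (hXb : Hits X {0, b}) :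
    ((a + b + 1 : ℝ) / 2 ≤
      ({r : ℤ | 0 ≤ r ∧ r < a + b ∧ ∀ m : ℤ, ∃ n ∈ X, m ≤ n ∧ n % (a + b) = r}).ncard) ∧
    (a + b + 1 : ℝ) / (2 * (a + b)) ≤ lowerDensity X :=
  stmt19_general a b ha hb hodd X hXa hXb
end
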